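/- Let a, b ∈ [0, 1). There exists δ ∈ (0, 1) such that for every local inverse g of f̄_{a,b} at 0 whose domain contains the image f̄_{a,b}({z : |z| ≤ δ}), and every odd integer k ≥ 1: g_k = (2/(π·k)) · Im( ∫₀^{π/2} f̄_{a,b}(δ·e^{iθ})^{−k} · i·δ·e^{iθ} dθ ), where g_k is the k-th Taylor coefficient of g at 0 (the integral is the contour integral of f̄_{a,b}(z)^{−k} over the first-quadrant quarter circle of radius δ). -/

import Mathlib

noncomputable section

open Real Set Filter intervalIntegral

/-- The rising factorial `(x)_k = x (x+1) ⋯ (x+k−1)`. -/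
def risingFac (x : ℝ) : ℕ → ℝ
  | 0 => 1
  | k + 1 => risingFac x k * (x + k)

/-- `c_k(a,b) = ((1−a)/2)_k ((1−b)/2)_k / ((3/2)_k k!)`. -/
def ckab (a b : ℝ) (k : ℕ) : ℝ :=
  risingFac ((1 - a) / 2) k * risingFac ((1 - b) / 2) k /
    (risingFac (3 / 2) k * (Nat.factorial k))

/-- `f̄_{a,b}(z) = Σ_k c_k(a,b) z^{2k+1}` as a function on `ℂ`. -/
def fbarC (a b : ℝ) (z : ℂ) : ℂ :=
  ∑' k : ℕ, (ckab a b k : ℂ) * z ^ (2 * k + 1)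

/-- `g` is a local inverse of `F` at `0`: `g` is analytic on a neighborhood of `0` and
`g (F z) = z` for all `z` in a neighborhood of `0`. -/
def IsLocalInverseAtZero (F g : ℂ → ℂ) : Prop :=
  (∃ U ∈ nhds (0 : ℂ), ∀ z ∈ U, AnalyticAt ℂ g z) ∧ ∀ᶠ z in nhds (0 : ℂ), g (F z) = z

/-- The `k`-th Taylor coefficient of `g` at `0`: `g^{(k)}(0)/k!`. -/
def taylorCoeff (g : ℂ → ℂ) (k : ℕ) : ℂ :=
  iteratedDeriv k g 0 / (Nat.factorial k)

/-!
Writing `f̄(z) = z u(z)` with `u(z) = ₂F₁((1-a)/2, (1-b)/2; 3/2; z²)`, `u(0) = 1`, the only zero of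
`f̄` on a small closed disc `|z| ≤ δ` is the simple zero at `0`, and `g ∘ f̄ = id` on that disc by
the identity theorem. Integrating by parts and expanding
`z = g(f̄ z) = ∑_{i ≤ k} g_i f̄(z)^i + f̄(z)^(k+1) F(f̄ z)` with `F` analytic,
`∮ f̄^(-k) dz = k ∮ z f̄^(-k-1) f̄' dz = k ∑_{i ≤ k} g_i ∮ f̄^(i-k-1) f̄' dz = 2πi k g_k`,
because `f̄^m f̄'` has a primitive for `m ≠ -1`, `f̄'/f̄ = 1/z + u'/u`, and `F(f̄) f̄'` is analytic
on the disc. Since `f̄` is odd with real coefficients, the integrand over the circle is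
`π`-periodic and on `[π/2, π]` it is minus the conjugate of its mirror image in `[0, π/2]`, so the
circle integral is `4i` times the imaginary part of the quarter-circle integral.
-/

open Metric Complex ComplexConjugate MeasureTheory

theorem risingFac_eq_ascPochhammer_eval (x : ℝ) (n : ℕ) :
    (risingFac x n : ℂ) = (ascPochhammer ℂ n).eval (x : ℂ) := by
  induction n with
  | zero => simp [risingFac]
  | succ n ih => simp [risingFac, ascPochhammer_succ_eval, ih]

theorem analyticAt_ordinaryHypergeometric {a b c w : ℂ} (hc : ∀ k : ℕ, c ≠ -k) (hw : ‖w‖ < 1) :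
    AnalyticAt ℂ (ordinaryHypergeometric a b c) w := by
  have hreg : ordinaryHypergeometric a b c = fun w : ℂ => Gamma c * regularizedGaussHGFun a b c w :=
    funext fun w => by
      rw [← ordinaryHypergeometric_div_Gamma_eq hc, mul_div_cancel₀ _ (Gamma_ne_zero hc)]
  have hw' : w ∈ eball (0 : ℂ) (regularizedGaussHGFunSeries a b c).radius :=
    lt_of_lt_of_le (by rw [edist_zero_right, enorm_eq_nnnorm]; exact_mod_cast hw)
      (radius_regularizedGaussHGFunSeries_ge_one a b c)
  rw [hreg]
  exact analyticAt_const.mul ((regularizedGaussHGFunSeries a b c).analyticOnNhd w hw')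

theorem AnalyticAt.exists_eq_sum_taylorCoeff_add_pow_mul {g : ℂ → ℂ} (hg : AnalyticAt ℂ g 0)
    (n : ℕ) :
    ∃ F : ℂ → ℂ, (∀ w, g w = ∑ i ∈ Finset.range n, taylorCoeff g i * w ^ i + w ^ n * F w) ∧
      ∀ w, AnalyticAt ℂ g w → AnalyticAt ℂ F w := by
  obtain ⟨F, hF0, hF⟩ := hg.exists_eq_sum_add_pow_mul n
  have hgF : ∀ w, g w = ∑ i ∈ Finset.range n, taylorCoeff g i * w ^ i + w ^ n * F w := by
    intro w
    rw [hF w, smul_eq_mul]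
    congr 1
    refine Finset.sum_congr rfl fun i _ => ?_
    rw [taylorCoeff, smul_eq_mul]
    ring
  refine ⟨F, hgF, fun w hw => ?_⟩
  rcases eq_or_ne w 0 with rfl | hw0
  · exact hF0
  have hP : AnalyticAt ℂ (fun v => ∑ i ∈ Finset.range n, taylorCoeff g i * v ^ i) w := by
    fun_prop
  refine ((hw.sub hP).div (analyticAt_id.pow n) (pow_ne_zero n hw0)).congr ?_
  filter_upwards [isOpen_ne.mem_nhds hw0] with v hv
  simp only [Pi.div_apply, Pi.sub_apply, Pi.pow_apply, id]
  rw [hgF v, add_sub_cancel_left, mul_div_cancel_left₀ _ (pow_ne_zero n hv)]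

theorem mul_zpow_mul_eq_sum_add {k : ℕ} {a : ℕ → ℂ} {w z d F : ℂ} (hw : w ≠ 0)
    (hz : z = ∑ i ∈ Finset.range (k + 1), a i * w ^ i + w ^ (k + 1) * F) :
    z * (w ^ (-(k : ℤ) - 1) * d) =
      ∑ i ∈ Finset.range (k + 1), a i * (w ^ ((i : ℤ) - k - 1) * d) + F * d := by
  have hpow : ∀ n : ℕ, w ^ n * w ^ (-(k : ℤ) - 1) = w ^ ((n : ℤ) - k - 1) := fun n => by
    rw [← zpow_natCast, ← zpow_add₀ hw]; ring_nf
  have hcancel : w ^ (k + 1) * w ^ (-(k : ℤ) - 1) = 1 := by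
    rw [hpow]; push_cast; ring_nf; exact zpow_zero _
  rw [hz, add_mul, Finset.sum_mul]
  congr 1
  · exact Finset.sum_congr rfl fun i _ => by rw [← hpow]; ring
  · linear_combination (F * d) * hcancel

section CircleIntegral

variable {f u g : ℂ → ℂ} {c : ℂ} {R : ℝ}

theorem continuousOn_zpow_mul_deriv {s : Set ℂ} (hf : AnalyticOnNhd ℂ f s)
    (hf0 : ∀ z ∈ s, f z ≠ 0) (m : ℤ) : ContinuousOn (fun z => f z ^ m * deriv f z) s :=
  (hf.continuousOn.zpow₀ m fun z hz => .inl (hf0 z hz)).mul hf.deriv.continuousOn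

theorem circleIntegral_zpow_mul_deriv_eq_zero (hR : 0 ≤ R) {m : ℤ} (hm : m ≠ -1)
    (hf : ∀ z ∈ sphere c R, DifferentiableAt ℂ f z) (hf0 : ∀ z ∈ sphere c R, f z ≠ 0) :
    ∮ z in C(c, R), f z ^ m * deriv f z = 0 := by
  have hm' : (m : ℂ) + 1 ≠ 0 := by exact_mod_cast (show m + 1 ≠ 0 by omega)
  refine circleIntegral.integral_eq_zero_of_hasDerivWithinAt hR
    (f := fun w => ((m : ℂ) + 1)⁻¹ * f w ^ (m + 1)) fun z hz => ?_
  have hprim := ((hasDerivAt_zpow (m + 1) (f z) (.inl (hf0 z hz))).comp z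
    (hf z hz).hasDerivAt).const_mul ((m : ℂ) + 1)⁻¹
  refine hprim.hasDerivWithinAt.congr_deriv ?_
  push_cast
  rw [add_sub_cancel_right, ← mul_assoc, ← mul_assoc, inv_mul_cancel₀ hm', one_mul]

theorem circleIntegral_zpow_eq_neg_mul (hR : 0 ≤ R) (hf : AnalyticOnNhd ℂ f (sphere c R))
    (hf0 : ∀ z ∈ sphere c R, f z ≠ 0) (n : ℤ) :
    ∮ z in C(c, R), f z ^ n = -n * ∮ z in C(c, R), z * (f z ^ (n - 1) * deriv f z) := by
  have hint : CircleIntegrable (fun z => -n * (z * (f z ^ (n - 1) * deriv f z))) c R :=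
    (continuousOn_const.mul (continuousOn_id.mul (continuousOn_zpow_mul_deriv hf hf0 _)))
      |>.circleIntegrable hR
  have hint' : CircleIntegrable (fun z => f z ^ n) c R :=
    (hf.continuousOn.zpow₀ n fun z hz => .inl (hf0 z hz)).circleIntegrable hR
  have hprim := circleIntegral.integral_eq_zero_of_hasDerivWithinAt hR
    (f := fun w => w * f w ^ n) fun z hz =>
      ((hasDerivAt_id z).mul ((hasDerivAt_zpow n (f z) (.inl (hf0 z hz))).comp z
        (hf z hz).differentiableAt.hasDerivAt)).hasDerivWithinAt
  simp only [id, one_mul, Function.comp_def] at hprim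
  rw [← circleIntegral.integral_const_mul, ← sub_eq_zero,
    ← circleIntegral.integral_sub hint' hint]
  convert hprim using 3 with z
  ring

theorem circleIntegral_zpow_neg_one_mul_deriv (hR : 0 < R) (hfu : ∀ z, f z = z * u z)
    (hu : AnalyticOnNhd ℂ u (closedBall 0 R)) (hu0 : ∀ z ∈ closedBall 0 R, u z ≠ 0) :
    ∮ z in C(0, R), f z ^ (-1 : ℤ) * deriv f z = 2 * π * I := by
  obtain rfl : f = fun z => z * u z := funext hfu
  have hlog : AnalyticOnNhd ℂ (fun z => (u z)⁻¹ * deriv u z) (closedBall 0 R) := fun z hz =>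
    ((hu z hz).fun_inv (hu0 z hz)).mul (hu z hz).deriv
  have hsplit : EqOn (fun z => (z * u z) ^ (-1 : ℤ) * deriv (fun z => z * u z) z)
      (fun z => (z - 0)⁻¹ + (u z)⁻¹ * deriv u z) (sphere 0 R) := by
    intro z hz
    have hz0 : z ≠ 0 := ne_of_mem_sphere hz hR.ne'
    have hu0z := hu0 z (sphere_subset_closedBall hz)
    dsimp only
    rw [deriv_fun_mul differentiableAt_fun_id (hu z (sphere_subset_closedBall hz)).differentiableAt]
    simp only [zpow_neg_one, sub_zero, deriv_id'', one_mul]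
    field_simp
  rw [circleIntegral.integral_congr hR.le hsplit, circleIntegral.integral_add
      ((circleIntegrable_sub_inv_iff).2 (.inr (by simpa using (abs_pos.2 hR.ne').ne)))
      (hlog.continuousOn.mono sphere_subset_closedBall |>.circleIntegrable hR.le),
    circleIntegral.integral_sub_center_inv _ hR.ne',
    circleIntegral_eq_zero_of_differentiable_on_off_countable hR.le countable_empty
      hlog.continuousOn fun z hz => (hlog z (ball_subset_closedBall hz.1)).differentiableAt,
    add_zero]

theorem circleIntegral_zpow_neg_eq_taylorCoeff (hR : 0 < R) (hfu : ∀ z, f z = z * u z)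
    (hu : AnalyticOnNhd ℂ u (closedBall 0 R)) (hu0 : ∀ z ∈ closedBall 0 R, u z ≠ 0)
    (hg : ∀ z ∈ closedBall 0 R, AnalyticAt ℂ g (f z)) (hgf : ∀ z ∈ sphere 0 R, g (f z) = z)
    (k : ℕ) : ∮ z in C(0, R), f z ^ (-(k : ℤ)) = 2 * π * I * k * taylorCoeff g k := by
  have hf : AnalyticOnNhd ℂ f (closedBall 0 R) := fun z hz => by
    rw [show f = fun z => z * u z from funext hfu]; exact analyticAt_id.mul (hu z hz)
  have hfs := hf.mono sphere_subset_closedBall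
  have hf0 : ∀ z ∈ sphere 0 R, f z ≠ 0 := fun z hz =>
    hfu z ▸ mul_ne_zero (ne_of_mem_sphere hz hR.ne') (hu0 z (sphere_subset_closedBall hz))
  have hg0 : AnalyticAt ℂ g 0 := by simpa [hfu] using hg 0 (mem_closedBall_self hR.le)
  obtain ⟨F, hgF, hF⟩ := hg0.exists_eq_sum_taylorCoeff_add_pow_mul (k + 1)
  set a := taylorCoeff g
  have hrem : AnalyticOnNhd ℂ (fun z => F (f z) * deriv f z) (closedBall 0 R) :=
    fun z hz => ((hF _ (hg z hz)).comp (hf z hz)).mul (hf z hz).deriv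
  have hterm : ∀ i ∈ Finset.range (k + 1),
      ∮ z in C(0, R), a i * (f z ^ ((i : ℤ) - k - 1) * deriv f z) =
        if i = k then a k * (2 * π * I) else 0 := by
    intro i _
    rw [circleIntegral.integral_const_mul]
    split_ifs with hik
    · rw [hik, show (k : ℤ) - k - 1 = -1 by ring,
        circleIntegral_zpow_neg_one_mul_deriv hR hfu hu hu0]
    · rw [circleIntegral_zpow_mul_deriv_eq_zero hR.le (by omega)
        (fun z hz => (hfs z hz).differentiableAt) hf0, mul_zero]
  have hint : ∀ i ∈ Finset.range (k + 1), CircleIntegrable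
      (fun z => a i * (f z ^ ((i : ℤ) - k - 1) * deriv f z)) 0 R := fun i _ =>
    (continuousOn_const.mul (continuousOn_zpow_mul_deriv hfs hf0 _)).circleIntegrable hR.le
  rw [circleIntegral_zpow_eq_neg_mul hR.le hfs hf0, circleIntegral.integral_congr hR.le
      fun z hz => mul_zpow_mul_eq_sum_add (hf0 z hz) ((hgf z hz).symm.trans (hgF _)),
    circleIntegral.integral_add (CircleIntegrable.fun_sum _ hint)
      ((hrem.continuousOn.mono sphere_subset_closedBall).circleIntegrable hR.le),
    circleIntegral.integral_fun_sum hint, Finset.sum_congr rfl hterm,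
    circleIntegral_eq_zero_of_differentiable_on_off_countable hR.le countable_empty
      hrem.continuousOn fun z hz => (hrem z (ball_subset_closedBall hz.1)).differentiableAt,
    Finset.sum_ite_eq', if_pos (Finset.self_mem_range_succ k)]
  push_cast
  ring

end CircleIntegral

theorem intervalIntegral_zero_two_pi_eq_four_I_mul_im {h : ℝ → ℂ}
    (hint : IntervalIntegrable h volume 0 (2 * π)) (hper : ∀ θ, h (θ + π) = h θ)
    (hrefl : ∀ θ, h (π - θ) = -conj (h θ)) :
    ∫ θ in (0 : ℝ)..2 * π, h θ = 4 * I * (∫ θ in (0 : ℝ)..π / 2, h θ).im := by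
  have hsub : ∀ {a b : ℝ}, 0 ≤ a → a ≤ b → b ≤ 2 * π → IntervalIntegrable h volume a b :=
    fun ha hab hb => hint.mono_set (uIcc_subset_uIcc (mem_uIcc_of_le ha (hab.trans hb))
      (mem_uIcc_of_le (ha.trans hab) hb))
  have hπ := pi_pos
  have hshift : ∫ θ in π..2 * π, h θ = ∫ θ in (0 : ℝ)..π, h θ := by
    have := intervalIntegral.integral_comp_add_right h π (a := 0) (b := π)
    simp only [hper, zero_add] at this
    rw [this, two_mul]
  have hreflect : ∫ θ in π / 2..π, h θ = -conj (∫ θ in (0 : ℝ)..π / 2, h θ) := by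
    have := intervalIntegral.integral_comp_sub_left h π (a := 0) (b := π / 2)
    simp only [hrefl, sub_zero, sub_half, intervalIntegral.integral_neg] at this
    rw [← this, intervalIntegral.intervalIntegral_conj]
  rw [← intervalIntegral.integral_add_adjacent_intervals (b := π)
      (hsub le_rfl hπ.le (by linarith)) (hsub hπ.le (by linarith) le_rfl), hshift,
    ← intervalIntegral.integral_add_adjacent_intervals (b := π / 2)
      (hsub le_rfl (by linarith) (by linarith)) (hsub (by linarith) (by linarith) (by linarith)),
    hreflect, ← sub_eq_add_neg, sub_conj]
  push_cast
  ring

theorem circleIntegral_eq_four_I_mul_im_quarter {F : ℂ → ℂ} {R : ℝ} (hF : CircleIntegrable F 0 R)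
    (hodd : ∀ z, F (-z) = -F z) (hconj : ∀ z, F (conj z) = conj (F z)) :
    ∮ z in C(0, R), F z =
      4 * I * (∫ θ in (0 : ℝ)..π / 2, F (R * exp (θ * I)) * (I * R * exp (θ * I))).im := by
  have hcircle : ∀ θ : ℝ, deriv (circleMap 0 R) θ • F (circleMap 0 R θ) =
      F (R * exp (θ * I)) * (I * R * exp (θ * I)) := fun θ => by
    rw [deriv_circleMap, circleMap, zero_add, smul_eq_mul]; ring
  have hint := hF.out
  simp only [circleIntegral, hcircle] at hint ⊢
  refine intervalIntegral_zero_two_pi_eq_four_I_mul_im hint (fun θ => ?_) fun θ => ?_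
  · have he : exp (↑(θ + π) * I) = -exp (θ * I) := by
      rw [ofReal_add, add_mul, Complex.exp_add, exp_pi_mul_I, mul_neg_one]
    rw [he, mul_neg, hodd]
    ring
  · have he : exp (↑(π - θ) * I) = -conj (exp (θ * I)) := by
      rw [← exp_conj, map_mul, conj_ofReal, conj_I, ofReal_sub, sub_mul, Complex.exp_sub,
        exp_pi_mul_I, mul_neg, Complex.exp_neg]
      ring
    rw [he, mul_neg, ← conj_ofReal R, ← map_mul, hodd, hconj]
    simp only [map_mul, conj_I, conj_ofReal]
    ring

theorem IsLocalInverseAtZero.apply_eq_of_mem_closedBall {F g : ℂ → ℂ} {R : ℝ}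
    (hg : IsLocalInverseAtZero F g) (hR : 0 ≤ R) (hF : AnalyticOnNhd ℂ F (closedBall 0 R))
    (hgF : ∀ z ∈ closedBall 0 R, AnalyticAt ℂ g (F z)) {z : ℂ} (hz : z ∈ closedBall 0 R) :
    g (F z) = z :=
  AnalyticOnNhd.eqOn_of_preconnected_of_eventuallyEq (fun z hz => (hgF z hz).comp (hF z hz))
    analyticOnNhd_id (convex_closedBall 0 R).isPreconnected (mem_closedBall_self hR) hg.2 hz

theorem ContinuousAt.exists_forall_closedBall_ne_zero {u : ℂ → ℂ} (hu : ContinuousAt u 0)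
    (hu0 : u 0 ≠ 0) {r : ℝ} (hr : 0 < r) : ∃ δ, 0 < δ ∧ δ < r ∧ ∀ z ∈ closedBall 0 δ, u z ≠ 0 := by
  obtain ⟨ε, hε, hεu⟩ := nhds_basis_closedBall.mem_iff.1 (hu.eventually_ne hu0)
  exact ⟨min ε (r / 2), by positivity, by linarith [min_le_right ε (r / 2)],
    fun z hz => hεu (closedBall_subset_closedBall (min_le_left _ _) hz)⟩

def fbarRatio (a b : ℝ) (z : ℂ) : ℂ :=
  ordinaryHypergeometric (((1 - a) / 2 : ℝ) : ℂ) (((1 - b) / 2 : ℝ) : ℂ) ((3 / 2 : ℝ) : ℂ) (z ^ 2)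

theorem fbarC_eq_mul_fbarRatio (a b : ℝ) (z : ℂ) : fbarC a b z = z * fbarRatio a b z := by
  rw [fbarC, fbarRatio, ordinaryHypergeometric_eq_tsum, ← tsum_mul_left]
  refine tsum_congr fun k => ?_
  simp only [ckab, ← risingFac_eq_ascPochhammer_eval, smul_eq_mul]
  push_cast
  ring

theorem fbarRatio_zero (a b : ℝ) : fbarRatio a b 0 = 1 := by
  simp [fbarRatio]

theorem analyticOnNhd_fbarRatio (a b : ℝ) : AnalyticOnNhd ℂ (fbarRatio a b) (ball 0 1) := by
  intro z hz
  have hc : ∀ k : ℕ, ((3 / 2 : ℝ) : ℂ) ≠ -k := fun k h => by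
    have := congrArg re h
    simp only [ofReal_re, neg_re, natCast_re] at this
    linarith [(k.cast_nonneg : (0 : ℝ) ≤ k)]
  have hz2 : ‖z ^ 2‖ < 1 := by
    rw [norm_pow]
    exact pow_lt_one₀ (norm_nonneg z) (mem_ball_zero_iff.1 hz) two_ne_zero
  exact (analyticAt_ordinaryHypergeometric hc hz2).comp (f := fun z : ℂ => z ^ 2) (by fun_prop)

theorem analyticOnNhd_fbarC (a b : ℝ) : AnalyticOnNhd ℂ (fbarC a b) (ball 0 1) := by
  rw [show fbarC a b = fun z => z * fbarRatio a b z from funext (fbarC_eq_mul_fbarRatio a b)]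
  exact fun z hz => analyticAt_id.mul (analyticOnNhd_fbarRatio a b z hz)

theorem fbarC_neg (a b : ℝ) (z : ℂ) : fbarC a b (-z) = -fbarC a b z := by
  rw [fbarC, fbarC, ← tsum_neg]
  exact tsum_congr fun k => by rw [Odd.neg_pow ⟨k, rfl⟩, mul_neg]

theorem fbarC_conj (a b : ℝ) (z : ℂ) : fbarC a b (conj z) = conj (fbarC a b z) := by
  rw [fbarC, fbarC, Complex.conj_tsum]
  exact tsum_congr fun k => by rw [map_mul, map_pow, conj_ofReal]

theorem inversion_formula (a b : ℝ) :
    ∃ δ : ℝ, 0 < δ ∧ δ < 1 ∧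
      ∀ g : ℂ → ℂ, IsLocalInverseAtZero (fbarC a b) g →
        (∀ z : ℂ, ‖z‖ ≤ δ → AnalyticAt ℂ g (fbarC a b z)) →
        ∀ k : ℕ, Odd k → 1 ≤ k →
          taylorCoeff g k =
            (((2 / (Real.pi * k)) *
                (∫ θ in (0 : ℝ)..(Real.pi / 2),
                  (fbarC a b (δ * Complex.exp (θ * Complex.I))) ^ (-(k : ℤ)) *
                    (Complex.I * δ * Complex.exp (θ * Complex.I))).im : ℝ) : ℂ) := by
  obtain ⟨δ, hδ0, hδ1, hu0⟩ := (analyticOnNhd_fbarRatio a b 0 (mem_ball_self one_pos)).continuousAt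
    |>.exists_forall_closedBall_ne_zero (by rw [fbarRatio_zero]; exact one_ne_zero) one_pos
  have hu := (analyticOnNhd_fbarRatio a b).mono (closedBall_subset_ball hδ1)
  have hf := (analyticOnNhd_fbarC a b).mono (closedBall_subset_ball hδ1)
  refine ⟨δ, hδ0, hδ1, fun g hg hgf k hk _ => ?_⟩
  have hgf' : ∀ z ∈ closedBall 0 δ, AnalyticAt ℂ g (fbarC a b z) :=
    fun z hz => hgf z (mem_closedBall_zero_iff.1 hz)
  have hlagrange := circleIntegral_zpow_neg_eq_taylorCoeff hδ0 (fbarC_eq_mul_fbarRatio a b) hu hu0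
    hgf' (fun z hz => hg.apply_eq_of_mem_closedBall hδ0.le hf hgf' (sphere_subset_closedBall hz)) k
  have hint : CircleIntegrable (fun z => fbarC a b z ^ (-(k : ℤ))) 0 δ :=
    ((hf.continuousOn.mono sphere_subset_closedBall).zpow₀ _ fun z hz => .inl <|
      fbarC_eq_mul_fbarRatio a b z ▸ mul_ne_zero (ne_of_mem_sphere hz hδ0.ne')
        (hu0 z (sphere_subset_closedBall hz))).circleIntegrable hδ0.le
  rw [circleIntegral_eq_four_I_mul_im_quarter hint
    (fun z => by rw [fbarC_neg, hk.natCast.neg.neg_zpow]) (fun z => by rw [fbarC_conj, map_zpow₀])]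
    at hlagrange
  set X := (∫ θ in (0 : ℝ)..π / 2, fbarC a b (δ * exp (θ * I)) ^ (-(k : ℤ)) *
    (I * δ * exp (θ * I))).im
  have hk0 : (k : ℂ) ≠ 0 := by exact_mod_cast hk.pos.ne'
  push_cast
  field_simp
  refine mul_left_cancel₀ I_ne_zero ?_
  linear_combination (-1 / 2) * hlagrange
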